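/- (Assertion 4, duality: the multi-pinning energy density is the convex conjugate of the multi-pinning co-energy density.) Let E be a finite-dimensional real inner product space, let μ₀ > 0 and N ≥ 1, and for k = 1,…,N let m_k > 0, χ_k ≥ 0, J_{p,k} ∈ E, and let U_k : E → ℝ be continuous and m_k-strongly convex. Define w_*(H) = (μ₀/2)‖H‖² − Σ_{k=1}^{N} inf_{J ∈ E} ( U_k(J) − ⟪H, J⟫ + χ_k‖J − J_{p,k}‖ ) and w(B) = inf_{(J_1,…,J_N) ∈ E^N} ( (1/(2μ₀))‖B − Σ_k J_k‖² + Σ_k ( U_k(J_k) + χ_k‖J_k − J_{p,k}‖ ) ). Then for every B ∈ E, w(B) = sup_{H ∈ E} ( ⟪H, B⟫ − w_*(H) ). -/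

import Mathlib

/-!
Write `g_k = U_k + χ_k ‖· - J_{p,k}‖`. For every field `H` and every family `(J_k)`, the gap
between the primal integrand and `⟪H, B⟫ - w_*(H)` is `(μ₀/2) ‖H - μ₀⁻¹ (B - ∑ J_k)‖²` plus,
for each `k`, the excess of `g_k(J_k) - ⟪H, J_k⟫` over its infimum in `J_k`; hence weak duality.
Strong convexity makes the primal integrand coercive, so it has a minimiser `(J_k)`. Minimality
in the `k`-th coordinate alone, together with convexity of `g_k`, shows that `J_k` minimises
`g_k - ⟪H, ·⟫` for `H = μ₀⁻¹ (B - ∑ J_k)`, and at this `H` the gap vanishes.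
-/

open RealInnerProductSpace

open Set Filter Topology

lemma Finset.sum_update_univ {ι M : Type*} [Fintype ι] [DecidableEq ι] [AddCommGroup M]
    (f : ι → M) (i : ι) (b : M) : ∑ j, Function.update f i b j = ∑ j, f j - f i + b := by
  rw [Finset.sum_update_of_mem (Finset.mem_univ i),
    ← Finset.sum_erase_add _ _ (Finset.mem_univ i), Finset.sdiff_singleton_eq_erase]
  abel

lemma tendsto_sum_apply_cocompact_atTop {ι : Type*} [Fintype ι] {X : ι → Type*}
    [∀ i, TopologicalSpace (X i)] {f : ∀ i, X i → ℝ} (hbdd : ∀ i, BddBelow (range (f i)))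
    (hf : ∀ i, Tendsto (f i) (cocompact (X i)) atTop) :
    Tendsto (fun x => ∑ i, f i (x i)) (cocompact (∀ i, X i)) atTop := by
  choose b hb using hbdd
  rw [← coprodᵢ_cocompact, Filter.coprodᵢ, tendsto_iSup]
  intro i
  refine tendsto_atTop_mono (fun x => ?_) <|
    tendsto_atTop_add_const_right _ (∑ j, b j - b i) ((hf i).comp tendsto_comap)
  have hle : f i (x i) - b i ≤ ∑ j, (f j (x j) - b j) :=
    Finset.single_le_sum (f := fun j => f j (x j) - b j)
      (fun j _ => sub_nonneg.2 (hb j ⟨x j, rfl⟩)) (Finset.mem_univ i)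
  rw [Finset.sum_sub_distrib] at hle
  simp only [Function.comp_apply]
  linarith

lemma ciSup_eq_ciInf_of_forall_le_of_eq {α β γ : Type*} [ConditionallyCompleteLattice γ]
    {D : α → γ} {G : β → γ} (hle : ∀ a b, D a ≤ G b) {a₀ : α} {b₀ : β} (heq : D a₀ = G b₀) :
    ⨆ a, D a = ⨅ b, G b := by
  have : Nonempty α := ⟨a₀⟩
  have : Nonempty β := ⟨b₀⟩
  refine le_antisymm (ciSup_le fun a => le_ciInf (hle a)) ?_
  calc ⨅ b, G b ≤ G b₀ := ciInf_le ⟨D a₀, forall_mem_range.2 (hle a₀)⟩ b₀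
    _ = D a₀ := heq.symm
    _ ≤ ⨆ a, D a := le_ciSup ⟨G b₀, forall_mem_range.2 fun a => hle a b₀⟩ a₀

section

variable {E : Type*} [NormedAddCommGroup E]

lemma ConvexOn.exists_neg_mul_norm_add_one_le [NormedSpace ℝ E] [ProperSpace E] {h : E → ℝ}
    (hconv : ConvexOn ℝ univ h) (hcont : Continuous h) :
    ∃ C, ∀ x, -C * (‖x‖ + 1) ≤ h x := by
  obtain ⟨c, hc⟩ := (isCompact_closedBall (0 : E) 1).bddBelow_image hcont.continuousOn
  refine ⟨|c| + |h 0|, fun x => ?_⟩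
  have hball : ∀ y, ‖y‖ ≤ 1 → c ≤ h y := fun y hy => hc ⟨y, by simpa using hy, rfl⟩
  have hC : 0 ≤ |c| + |h 0| := by positivity
  rcases le_or_gt ‖x‖ 1 with hx | hx
  · nlinarith [hball x hx, neg_abs_le c, abs_nonneg (h 0), mul_nonneg hC (norm_nonneg x)]
  · -- the point `‖x‖⁻¹ • x` of the unit ball lies on the segment from `x` to `0`
    have ht : 0 < ‖x‖⁻¹ := by positivity
    have htx : ‖x‖⁻¹ * ‖x‖ = 1 := inv_mul_cancel₀ (by positivity)
    have hseg := hconv.2 (mem_univ x) (mem_univ 0) ht.le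
      (sub_nonneg.2 (inv_le_one_of_one_le₀ hx.le)) (add_sub_cancel _ 1)
    simp only [smul_zero, add_zero, smul_eq_mul] at hseg
    have hy := hball (‖x‖⁻¹ • x) (by rw [norm_smul, Real.norm_of_nonneg ht.le, htx])
    have hkey : ‖x‖ * c ≤ h x + (‖x‖ - 1) * h 0 := by
      have := mul_le_mul_of_nonneg_left (hy.trans hseg) (norm_nonneg x)
      linear_combination this + (h x - h 0) * htx
    nlinarith [abs_nonneg c, abs_nonneg (h 0),
      mul_le_mul_of_nonneg_left (neg_abs_le c) (norm_nonneg x),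
      mul_le_mul_of_nonneg_left (le_abs_self (h 0)) (sub_nonneg.2 hx.le)]

lemma ConvexOn.le_of_forall_le_add_mul_norm_sub_sq [NormedSpace ℝ E] {h : E → ℝ}
    (hh : ConvexOn ℝ univ h) {x₀ : E} {K : ℝ} (hK : ∀ x, h x₀ ≤ h x + K * ‖x - x₀‖ ^ 2)
    (x : E) : h x₀ ≤ h x := by
  have hseg : ∀ t ∈ Ioo (0 : ℝ) 1, h x₀ ≤ h x + t * (K * ‖x - x₀‖ ^ 2) := by
    rintro t ⟨ht0, ht1⟩
    have hconv := hh.2 (mem_univ x₀) (mem_univ x) (sub_nonneg.2 ht1.le) ht0.le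
      (sub_add_cancel 1 t)
    have hxt := hK ((1 - t) • x₀ + t • x)
    rw [show (1 - t) • x₀ + t • x - x₀ = t • (x - x₀) by module, norm_smul,
      Real.norm_of_nonneg ht0.le] at hxt
    simp only [smul_eq_mul] at hconv
    refine le_of_mul_le_mul_left ?_ ht0
    linarith
  have hlim : Tendsto (fun t => h x + t * (K * ‖x - x₀‖ ^ 2)) (𝓝[>] 0) (𝓝 (h x)) :=
    ((continuous_const.add (continuous_id.mul continuous_const)).tendsto' 0 _
      (by simp)).mono_left nhdsWithin_le_nhds
  exact ge_of_tendsto hlim (eventually_of_mem (Ioo_mem_nhdsGT one_pos) hseg)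

lemma StrongConvexOn.add_convexOn [NormedSpace ℝ E] {s : Set E} {f g : E → ℝ} {m : ℝ}
    (hf : StrongConvexOn s m f) (hg : ConvexOn ℝ s g) : StrongConvexOn s m (f + g) := by
  have h := hf.add (uniformConvexOn_zero.2 hg)
  rwa [add_zero] at h

variable [InnerProductSpace ℝ E]

lemma StrongConvexOn.sub_inner {s : Set E} {f : E → ℝ} {m : ℝ} (hf : StrongConvexOn s m f)
    (H : E) : StrongConvexOn s m fun x => f x - ⟪H, x⟫ := by
  have h := hf.sub (uniformConcaveOn_zero.2 ((innerₛₗ ℝ H).concaveOn hf.1))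
  rwa [add_zero] at h

lemma StrongConvexOn.tendsto_cocompact_atTop [ProperSpace E] {f : E → ℝ} {m : ℝ} (hm : 0 < m)
    (hf : StrongConvexOn univ m f) (hcont : Continuous f) :
    Tendsto f (cocompact E) atTop := by
  obtain ⟨C, hC⟩ := (strongConvexOn_iff_convex.1 hf).exists_neg_mul_norm_add_one_le
    (hcont.sub (continuous_const.mul (continuous_norm.pow 2)))
  have hquad : Tendsto (fun r : ℝ => r * (m / 2 * r - C) - C) atTop atTop :=
    tendsto_atTop_add_const_right _ _ <| tendsto_id.atTop_mul_atTop₀ <|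
      tendsto_atTop_add_const_right _ _ <| tendsto_id.const_mul_atTop (by positivity)
  refine tendsto_atTop_mono (fun x => ?_) (hquad.comp tendsto_norm_cocompact_atTop)
  have := hC x
  simp only [Function.comp_apply]
  linarith

lemma StrongConvexOn.bddBelow_range [ProperSpace E] {f : E → ℝ} {m : ℝ} (hm : 0 < m)
    (hf : StrongConvexOn univ m f) (hcont : Continuous f) : BddBelow (range f) :=
  let ⟨x, hx⟩ := hcont.exists_forall_le (hf.tendsto_cocompact_atTop hm hcont)
  ⟨f x, forall_mem_range.2 hx⟩

lemma ConvexOn.sub_inner_le_of_forall_le {g : E → ℝ} (hg : ConvexOn ℝ univ g) {μ : ℝ}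
    (hμ : 0 < μ) {a v₀ : E}
    (hmin : ∀ v, 1 / (2 * μ) * ‖a - v₀‖ ^ 2 + g v₀ ≤ 1 / (2 * μ) * ‖a - v‖ ^ 2 + g v)
    (v : E) : g v₀ - ⟪μ⁻¹ • (a - v₀), v₀⟫ ≤ g v - ⟪μ⁻¹ • (a - v₀), v⟫ := by
  have htilt := hg.sub ((innerₛₗ ℝ (μ⁻¹ • (a - v₀))).concaveOn convex_univ)
  refine htilt.le_of_forall_le_add_mul_norm_sub_sq (K := 1 / (2 * μ)) (fun v => ?_) v
  have hv := hmin v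
  rw [show a - v = (a - v₀) - (v - v₀) by abel, norm_sub_sq_real (a - v₀)] at hv
  have hinner : ⟪μ⁻¹ • (a - v₀), v⟫ - ⟪μ⁻¹ • (a - v₀), v₀⟫
      = 1 / (2 * μ) * (2 * ⟪a - v₀, v - v₀⟫) := by
    rw [← inner_sub_right, real_inner_smul_left]
    field_simp
  simp only [Pi.sub_apply, innerₛₗ_apply_apply]
  linarith

lemma half_mul_norm_sub_inv_smul_sq {μ : ℝ} (hμ : μ ≠ 0) (H x : E) :
    μ / 2 * ‖H - μ⁻¹ • x‖ ^ 2 = 1 / (2 * μ) * ‖x‖ ^ 2 - ⟪H, x⟫ + μ / 2 * ‖H‖ ^ 2 := by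
  rw [norm_sub_sq_real, norm_smul, mul_pow, Real.norm_eq_abs, sq_abs, real_inner_smul_right]
  field_simp
  ring

end

namespace MultiPinning

variable {ι E : Type*} [Fintype ι] [NormedAddCommGroup E]

/- `g i` plays the pinned potential `U_i + χ_i ‖· - J_{p,i}‖`: the energy density `w(B)` is
`⨅ Js, energyIntegrand μ₀ g B Js` and the co-energy density `w_*` is `coenergy μ₀ g`. -/
noncomputable def energyIntegrand (μ : ℝ) (g : ι → E → ℝ) (B : E) (Js : ι → E) : ℝ :=
  1 / (2 * μ) * ‖B - ∑ i, Js i‖ ^ 2 + ∑ i, g i (Js i)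

lemma energyIntegrand_update [DecidableEq ι] (μ : ℝ) (g : ι → E → ℝ) (B : E) (Js : ι → E)
    (i : ι) (v : E) :
    energyIntegrand μ g B (Function.update Js i v)
      = 1 / (2 * μ) * ‖(B - ∑ j, Js j + Js i) - v‖ ^ 2 + g i v
        + (∑ j, g j (Js j) - g i (Js i)) := by
  simp only [energyIntegrand, Function.apply_update (fun j => g j), Finset.sum_update_univ]
  rw [show B - (∑ j, Js j - Js i + v) = B - ∑ j, Js j + Js i - v by abel]
  ring

variable [InnerProductSpace ℝ E]

noncomputable def coenergy (μ : ℝ) (g : ι → E → ℝ) (H : E) : ℝ :=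
  μ / 2 * ‖H‖ ^ 2 - ∑ i, ⨅ J, (g i J - ⟪H, J⟫)

lemma energyIntegrand_sub_inner_sub_coenergy {μ : ℝ} (hμ : μ ≠ 0) (g : ι → E → ℝ)
    (B H : E) (Js : ι → E) :
    energyIntegrand μ g B Js - (⟪H, B⟫ - coenergy μ g H)
      = μ / 2 * ‖H - μ⁻¹ • (B - ∑ i, Js i)‖ ^ 2
        + ∑ i, (g i (Js i) - ⟪H, Js i⟫ - ⨅ J, (g i J - ⟪H, J⟫)) := by
  rw [half_mul_norm_sub_inv_smul_sq hμ, energyIntegrand, coenergy, Finset.sum_sub_distrib,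
    Finset.sum_sub_distrib, ← inner_sum, inner_sub_right]
  ring

variable {μ : ℝ} {g : ι → E → ℝ}

lemma inner_sub_coenergy_le (hμ : 0 < μ)
    (hbdd : ∀ i H, BddBelow (range fun J => g i J - ⟪H, J⟫)) (B H : E) (Js : ι → E) :
    ⟪H, B⟫ - coenergy μ g H ≤ energyIntegrand μ g B Js := by
  have hgap := energyIntegrand_sub_inner_sub_coenergy hμ.ne' g B H Js
  have hquad : 0 ≤ μ / 2 * ‖H - μ⁻¹ • (B - ∑ i, Js i)‖ ^ 2 := by positivity
  have htilt : 0 ≤ ∑ i, (g i (Js i) - ⟪H, Js i⟫ - ⨅ J, (g i J - ⟪H, J⟫)) :=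
    Finset.sum_nonneg fun i _ => sub_nonneg.2 (ciInf_le (hbdd i H) (Js i))
  linarith

lemma sub_inner_le_of_forall_energyIntegrand_le (hμ : 0 < μ)
    (hconv : ∀ i, ConvexOn ℝ univ (g i)) {B : E} {Js : ι → E}
    (hmin : ∀ Js', energyIntegrand μ g B Js ≤ energyIntegrand μ g B Js') (i : ι) (v : E) :
    g i (Js i) - ⟪μ⁻¹ • (B - ∑ j, Js j), Js i⟫ ≤ g i v - ⟪μ⁻¹ • (B - ∑ j, Js j), v⟫ := by
  classical
  have hcoord : ∀ v, 1 / (2 * μ) * ‖(B - ∑ j, Js j + Js i) - Js i‖ ^ 2 + g i (Js i)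
      ≤ 1 / (2 * μ) * ‖(B - ∑ j, Js j + Js i) - v‖ ^ 2 + g i v := fun v => by
    have h := hmin (Function.update Js i v)
    rw [← Function.update_eq_self i Js, energyIntegrand_update, energyIntegrand_update,
      Function.update_eq_self] at h
    linarith
  simpa only [add_sub_cancel_right] using (hconv i).sub_inner_le_of_forall_le hμ hcoord v

lemma inner_sub_coenergy_eq_of_forall_energyIntegrand_le (hμ : 0 < μ)
    (hconv : ∀ i, ConvexOn ℝ univ (g i))
    (hbdd : ∀ i H, BddBelow (range fun J => g i J - ⟪H, J⟫)) {B : E} {Js : ι → E}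
    (hmin : ∀ Js', energyIntegrand μ g B Js ≤ energyIntegrand μ g B Js') :
    ⟪μ⁻¹ • (B - ∑ i, Js i), B⟫ - coenergy μ g (μ⁻¹ • (B - ∑ i, Js i))
      = energyIntegrand μ g B Js := by
  have htilt : ∀ i, ⨅ J, (g i J - ⟪μ⁻¹ • (B - ∑ j, Js j), J⟫)
      = g i (Js i) - ⟪μ⁻¹ • (B - ∑ j, Js j), Js i⟫ := fun i =>
    le_antisymm (ciInf_le (hbdd i _) (Js i))
      (le_ciInf (sub_inner_le_of_forall_energyIntegrand_le hμ hconv hmin i))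
  have hgap := energyIntegrand_sub_inner_sub_coenergy hμ.ne' g B (μ⁻¹ • (B - ∑ i, Js i)) Js
  simp only [htilt, sub_self, norm_zero, Finset.sum_const_zero] at hgap
  linarith

lemma exists_forall_energyIntegrand_le [ProperSpace E] (hμ : 0 < μ) {m : ι → ℝ}
    (hm : ∀ i, 0 < m i) (hconv : ∀ i, StrongConvexOn univ (m i) (g i))
    (hcont : ∀ i, Continuous (g i)) (B : E) :
    ∃ Js, ∀ Js', energyIntegrand μ g B Js ≤ energyIntegrand μ g B Js' := by
  refine Continuous.exists_forall_le (by unfold energyIntegrand; fun_prop) ?_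
  have hquad : ∀ Js : ι → E, 0 ≤ 1 / (2 * μ) * ‖B - ∑ i, Js i‖ ^ 2 := fun Js => by positivity
  exact tendsto_atTop_mono (fun Js => le_add_of_nonneg_left (hquad Js)) <|
    tendsto_sum_apply_cocompact_atTop (fun i => (hconv i).bddBelow_range (hm i) (hcont i))
      fun i => (hconv i).tendsto_cocompact_atTop (hm i) (hcont i)

theorem iInf_energyIntegrand_eq_iSup_inner_sub_coenergy [ProperSpace E] (hμ : 0 < μ)
    {m : ι → ℝ} (hm : ∀ i, 0 < m i) (hconv : ∀ i, StrongConvexOn univ (m i) (g i))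
    (hcont : ∀ i, Continuous (g i)) (B : E) :
    ⨅ Js, energyIntegrand μ g B Js = ⨆ H, (⟪H, B⟫ - coenergy μ g H) := by
  have hconv' : ∀ i, ConvexOn ℝ univ (g i) := fun i =>
    (hconv i).convexOn fun r => mul_nonneg (half_pos (hm i)).le (sq_nonneg r)
  have hbdd : ∀ i H, BddBelow (range fun J => g i J - ⟪H, J⟫) := fun i H =>
    ((hconv i).sub_inner H).bddBelow_range (hm i) ((hcont i).sub (by fun_prop))
  obtain ⟨Js, hmin⟩ := exists_forall_energyIntegrand_le hμ hm hconv hcont B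
  exact (ciSup_eq_ciInf_of_forall_le_of_eq (inner_sub_coenergy_le hμ hbdd B)
    (inner_sub_coenergy_eq_of_forall_energyIntegrand_le hμ hconv' hbdd hmin)).symm

end MultiPinning

theorem multi_pinning_energy_is_conjugate_of_coenergy_general
    {E : Type*} [NormedAddCommGroup E] [InnerProductSpace ℝ E] [FiniteDimensional ℝ E]
    (μ₀ : ℝ) (hμ₀ : 0 < μ₀) (N : ℕ)
    (m χ : Fin N → ℝ) (hm : ∀ k, 0 < m k) (hχ : ∀ k, 0 ≤ χ k)
    (Jp : Fin N → E)
    (U : Fin N → E → ℝ) (hUcont : ∀ k, Continuous (U k))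
    (hUconv : ∀ k, StrongConvexOn Set.univ (m k) (U k)) :
    ∀ B : E,
      (⨅ Js : Fin N → E,
        (1 / (2 * μ₀) * ‖B - ∑ k, Js k‖ ^ 2
          + ∑ k, (U k (Js k) + χ k * ‖Js k - Jp k‖)))
      = ⨆ H : E, (⟪H, B⟫ -
          (μ₀ / 2 * ‖H‖ ^ 2
            - ∑ k, (⨅ J : E, (U k J - ⟪H, J⟫ + χ k * ‖J - Jp k‖)))) := by
  intro B
  have hpinned : ∀ k, StrongConvexOn univ (m k) fun J => U k J + χ k * ‖J - Jp k‖ := fun k => by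
    refine (hUconv k).add_convexOn ?_
    simpa only [dist_eq_norm, smul_eq_mul] using (convexOn_dist (Jp k) convex_univ).smul (hχ k)
  have hduality := MultiPinning.iInf_energyIntegrand_eq_iSup_inner_sub_coenergy hμ₀ hm hpinned
    (fun k => by fun_prop) B
  simpa only [MultiPinning.energyIntegrand, MultiPinning.coenergy, sub_add_eq_add_sub]
    using hduality

/-- Assertion 4, duality: the multi-pinning energy density is the convex
conjugate of the multi-pinning co-energy density. -/
theorem multi_pinning_energy_is_conjugate_of_coenergy
    {E : Type*} [NormedAddCommGroup E] [InnerProductSpace ℝ E] [FiniteDimensional ℝ E]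
    (μ₀ : ℝ) (hμ₀ : 0 < μ₀) (N : ℕ) (hN : 1 ≤ N)
    (m χ : Fin N → ℝ) (hm : ∀ k, 0 < m k) (hχ : ∀ k, 0 ≤ χ k)
    (Jp : Fin N → E)
    (U : Fin N → E → ℝ) (hUcont : ∀ k, Continuous (U k))
    (hUconv : ∀ k, StrongConvexOn Set.univ (m k) (U k)) :
    ∀ B : E,
      (⨅ Js : Fin N → E,
        (1 / (2 * μ₀) * ‖B - ∑ k, Js k‖ ^ 2
          + ∑ k, (U k (Js k) + χ k * ‖Js k - Jp k‖)))
      = ⨆ H : E, (⟪H, B⟫ -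
          (μ₀ / 2 * ‖H‖ ^ 2
            - ∑ k, (⨅ J : E, (U k J - ⟪H, J⟫ + χ k * ‖J - Jp k‖)))) :=
  multi_pinning_energy_is_conjugate_of_coenergy_general μ₀ hμ₀ N m χ hm hχ Jp U hUcont hUconv
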